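/- Let G be a finite simple chordal graph that is P_7-free, IR an irredundant set of G, A ∈ D_RN(G), and let C_1, …, C_k be exactly those irredundant components of G that are not dominated by A (i.e., C_i ⊄ N(A)). Then a set I ⊆ IR is an irredundant extension of A (i.e., A ∪ I is a minimal dominating set of G) if and only if I = {x_1, …, x_k} for some choice of vertices x_i ∈ C_i, one from each component C_i. -/
import Mathlib


variable {V : Type*}

/-- The closed neighborhood `N[x]` of a vertex. -/
def cnbr (G : SimpleGraph V) (x : V) : Set V := insert x (G.neighborSet x)

/-- `N[X] = ⋃ x ∈ X, N[x]`. -/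
def cnbrSet (G : SimpleGraph V) (X : Set V) : Set V := ⋃ x ∈ X, cnbr G x

/-- `N(X) = N[X] \ X`. -/
def onbrSet (G : SimpleGraph V) (X : Set V) : Set V := cnbrSet G X \ X

/-- `D` dominates `X` if `X ⊆ N[D]`. -/
def Dominates (G : SimpleGraph V) (D X : Set V) : Prop := X ⊆ cnbrSet G D

/-- `D` is a minimal dominating set of `G`. -/
def IsMinDomSet (G : SimpleGraph V) (D : Set V) : Prop :=
  Dominates G D Set.univ ∧ ∀ D' : Set V, D' ⊂ D → ¬ Dominates G D' Set.univ

/-- `Priv(D, x)`: private neighbors of `x` w.r.t. `D`. -/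
def priv (G : SimpleGraph V) (D : Set V) (x : V) : Set V := {u | cnbr G u ∩ D = {x}}

/-- `IR` is an irredundant set of `G`. -/
def IsIrredundantSet (G : SimpleGraph V) (IR : Set V) : Prop :=
  (∀ v : V, ∃ x ∈ IR, cnbr G x ⊆ cnbr G v) ∧
  (∀ x ∈ IR, ∀ v : V, ¬ cnbr G v ⊂ cnbr G x) ∧
  (∀ x ∈ IR, ∀ y ∈ IR, x ≠ y → cnbr G x ≠ cnbr G y)

/-- `Priv_IR(D, x) = Priv(D, x) ∩ IR`. -/
def privIR (G : SimpleGraph V) (IR D : Set V) (x : V) : Set V := priv G D x ∩ IR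

/-- `A ∈ D_RN(G)`: `A` is the intersection of a minimal dominating set with `RN = V \ IR`. -/
def memDRN (G : SimpleGraph V) (IR A : Set V) : Prop :=
  ∃ D : Set V, IsMinDomSet G D ∧ A = D ∩ IRᶜ

/-- `G` is `P_k`-free: it has no induced path on `k` vertices. -/
def PkFree (G : SimpleGraph V) (k : ℕ) : Prop :=
  ¬ ∃ f : Fin k → V, Function.Injective f ∧
      ∀ i j : Fin k, G.Adj (f i) (f j) ↔ (i.val + 1 = j.val ∨ j.val + 1 = i.val)

/-- `G` is chordal: no induced cycle on `n ≥ 4` vertices. -/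
def Chordal (G : SimpleGraph V) : Prop :=
  ∀ n : ℕ, 4 ≤ n → ¬ ∃ f : ZMod n → V, Function.Injective f ∧
      ∀ i j : ZMod n, G.Adj (f i) (f j) ↔ (i = j + 1 ∨ j = i + 1)

/-- `C` is a connected component of the subgraph of `G` induced by `S`. -/
def IsCompOf (G : SimpleGraph V) (S C : Set V) : Prop :=
  C ⊆ S ∧ C.Nonempty ∧ (G.induce C).Connected ∧
    ∀ x ∈ C, ∀ y ∈ S, G.Adj x y → y ∈ C

/-- `B(A)`: the elements of `A` having an irredundant private neighbor in some irredundant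
component entirely contained in `N(A)`. -/
def Bset (G : SimpleGraph V) (IR A : Set V) : Set V :=
  {a ∈ A | ∃ C : Set V, IsCompOf G IR C ∧ C ⊆ onbrSet G A ∧ (privIR G IR A a ∩ C).Nonempty}

/-- Domination inside the subgraph induced by `C`: every `u ∈ X` equals, or is adjacent
(within `C`) to, some `d ∈ D`.  For `D, X ⊆ C` this is domination in `G[C]`. -/
def domIn (G : SimpleGraph V) (C D X : Set V) : Prop :=
  ∀ u ∈ X, ∃ d ∈ D, u = d ∨ (G.Adj d u ∧ d ∈ C ∧ u ∈ C)


namespace Aux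

lemma mem_cnbr {G : SimpleGraph V} {x u : V} : u ∈ cnbr G x ↔ u = x ∨ G.Adj x u := by
  simp [cnbr]

lemma self_mem_cnbr {G : SimpleGraph V} (x : V) : x ∈ cnbr G x := by simp [mem_cnbr]

lemma cnbr_comm {G : SimpleGraph V} {x u : V} : u ∈ cnbr G x ↔ x ∈ cnbr G u := by
  simp only [mem_cnbr]
  constructor
  · rintro (h | h)
    · exact Or.inl h.symm
    · exact Or.inr h.symm
  · rintro (h | h)
    · exact Or.inl h.symm
    · exact Or.inr h.symm

lemma mem_cnbrSet {G : SimpleGraph V} {D : Set V} {v : V} :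
    v ∈ cnbrSet G D ↔ ∃ d ∈ D, v ∈ cnbr G d := by simp [cnbrSet]

lemma cnbrSet_mono {G : SimpleGraph V} {D D' : Set V} (h : D ⊆ D') :
    cnbrSet G D ⊆ cnbrSet G D' := by
  intro v hv
  rcases mem_cnbrSet.1 hv with ⟨d, hd, hvd⟩
  exact mem_cnbrSet.2 ⟨d, h hd, hvd⟩

/-- An induced path on `n` vertices. -/
def IndPath (G : SimpleGraph V) (n : ℕ) (f : Fin n → V) : Prop :=
  Function.Injective f ∧
    ∀ i j : Fin n, G.Adj (f i) (f j) ↔ (i.val + 1 = j.val ∨ j.val + 1 = i.val)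

lemma IndPath.rev {G : SimpleGraph V} {n : ℕ} {f : Fin n → V} (hf : IndPath G n f) :
    IndPath G n (f ∘ Fin.rev) := by
  refine ⟨hf.1.comp Fin.rev_injective, fun i j => ?_⟩
  rw [Function.comp_apply, Function.comp_apply, hf.2]
  have hi := i.isLt; have hj := j.isLt
  have h1 : (Fin.rev i).val = n - (i.val + 1) := Fin.val_rev i
  have h2 : (Fin.rev j).val = n - (j.val + 1) := Fin.val_rev j
  omega

lemma IndPath.castLE {G : SimpleGraph V} {n m : ℕ} {f : Fin n → V} (hf : IndPath G n f)
    (h : m ≤ n) : IndPath G m (f ∘ Fin.castLE h) := by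
  refine ⟨hf.1.comp (Fin.castLE_injective h), fun i j => ?_⟩
  rw [Function.comp_apply, Function.comp_apply, hf.2]
  rfl

/-- Appending a vertex adjacent only to the last vertex of an induced path. -/
lemma IndPath.snoc {G : SimpleGraph V} {n : ℕ} (hn : 1 ≤ n) {f : Fin n → V}
    (hf : IndPath G n f) {q : V}
    (hlast : G.Adj (f ⟨n - 1, by omega⟩) q)
    (hmid : ∀ i : Fin n, i.val + 1 < n → q ∉ cnbr G (f i)) :
    IndPath G (n + 1) (fun i : Fin (n+1) => if h : i.val < n then f ⟨i.val, h⟩ else q) := by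
  have hqne : ∀ i : Fin n, q ≠ f i := by
    intro i hq
    by_cases hi : i.val + 1 < n
    · exact hmid i hi (hq ▸ self_mem_cnbr _)
    · have : i = ⟨n - 1, by omega⟩ := Fin.ext (show i.val = n - 1 by have := i.isLt; omega)
      exact hlast.ne' (by rw [this] at hq; exact hq)
  have hqnadj : ∀ i : Fin n, i.val + 1 < n → ¬ G.Adj q (f i) := by
    intro i hi hadj
    exact hmid i hi (mem_cnbr.2 (Or.inr hadj.symm))
  constructor
  · intro i j hij
    by_cases hi : i.val < n <;> by_cases hj : j.val < n <;> simp only [hi, hj, dif_pos, dif_neg,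
      not_lt] at hij ⊢
    · have := hf.1 hij
      exact Fin.ext (Fin.mk_eq_mk.1 this)
    · exact absurd hij.symm (hqne _)
    · exact absurd hij (hqne _)
    · have := i.isLt; have := j.isLt
      exact Fin.ext (by omega)
  · intro i j
    by_cases hi : i.val < n <;> by_cases hj : j.val < n <;>
      simp only [hi, hj, dif_pos, dif_neg, not_lt]
    · rw [hf.2]
    · -- j is the new vertex q
      have hjv : j.val = n := by have := j.isLt; simp at hj; omega
      constructor
      · intro hadj
        by_cases hlt : i.val + 1 < n
        · exact absurd hadj.symm (hqnadj ⟨i.val, hi⟩ hlt)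
        · left; omega
      · rintro (h | h)
        · have : (⟨i.val, hi⟩ : Fin n) = ⟨n - 1, by omega⟩ := Fin.ext (by simp; omega)
          rw [this]; exact hlast
        · omega
    · have hiv : i.val = n := by have := i.isLt; simp at hi; omega
      constructor
      · intro hadj
        by_cases hlt : j.val + 1 < n
        · exact absurd hadj (hqnadj ⟨j.val, hj⟩ hlt)
        · right; omega
      · rintro (h | h)
        · omega
        · have : (⟨j.val, hj⟩ : Fin n) = ⟨n - 1, by omega⟩ := Fin.ext (by simp; omega)
          rw [this]; exact hlast.symm
    · have hi' := i.isLt; have hj' := j.isLt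
      exact iff_of_false (G.irrefl) (by omega)

/-- Chordality: a vertex adjacent to two non-consecutive vertices of an induced path,
but to nothing strictly between them, yields an induced cycle — contradiction. -/
lemma chordal_fan {G : SimpleGraph V} (hch : Chordal G) {n : ℕ} {f : Fin n → V}
    (hf : IndPath G n f) {p : V} {a b : ℕ} (hab : a + 2 ≤ b) (hb : b < n)
    (hpa : G.Adj p (f ⟨a, by omega⟩)) (hpb : G.Adj p (f ⟨b, hb⟩))
    (hmid : ∀ k : Fin n, a < k.val → k.val < b → p ∉ cnbr G (f k)) : False := by
  set m := b - a + 2 with hm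
  have hm4 : 4 ≤ m := by omega
  haveI : NeZero m := ⟨by omega⟩
  haveI : Fact (1 < m) := ⟨by omega⟩
  have hvlt : ∀ i : ZMod m, i.val < m := fun i => ZMod.val_lt i
  have hidx : ∀ i : ZMod m, ¬ i.val = 0 → a + i.val - 1 < n := by
    intro i hi; have := hvlt i; omega
  set g : ZMod m → V := fun i =>
    if h : i.val = 0 then p else f ⟨a + i.val - 1, by have := hvlt i; omega⟩ with hg
  have gv0 : ∀ i : ZMod m, i.val = 0 → g i = p := by
    intro i h; simp only [hg]; rw [dif_pos h]
  have gv : ∀ (i : ZMod m) (h : ¬ i.val = 0), g i = f ⟨a + i.val - 1, hidx i h⟩ := by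
    intro i h; simp only [hg]; rw [dif_neg h]
  have hsucc : ∀ i j : ZMod m, i = j + 1 ↔
      ((j.val + 1 < m ∧ i.val = j.val + 1) ∨ (j.val + 1 = m ∧ i.val = 0)) := by
    intro i j
    have base : i = j + 1 ↔ i.val = (j.val + 1) % m := by
      constructor
      · intro h; rw [h, ZMod.val_add, ZMod.val_one]
      · intro h; apply ZMod.val_injective; rw [ZMod.val_add, ZMod.val_one]; exact h
    rw [base]
    rcases Nat.lt_or_ge (j.val + 1) m with h | h
    · rw [Nat.mod_eq_of_lt h]; omega
    · have hjm : j.val + 1 = m := by have := hvlt j; omega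
      rw [hjm, Nat.mod_self]; omega
  have hpne : ∀ k : Fin n, a ≤ k.val → k.val ≤ b → p ≠ f k := by
    intro k hka hkb hpk
    rcases eq_or_lt_of_le hka with h | h
    · have hk : k = ⟨a, by omega⟩ := Fin.ext h.symm
      rw [hk] at hpk; exact hpa.ne hpk
    rcases eq_or_lt_of_le hkb with h' | h'
    · have hk : k = ⟨b, hb⟩ := Fin.ext h'
      rw [hk] at hpk; exact hpb.ne hpk
    · exact hmid k h h' (by rw [hpk]; exact self_mem_cnbr _)
  have hpnadj : ∀ k : Fin n, a < k.val → k.val < b → ¬ G.Adj p (f k) := by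
    intro k h1 h2 hadj
    exact hmid k h1 h2 (mem_cnbr.2 (Or.inr hadj.symm))
  apply hch m hm4
  refine ⟨g, ?_, ?_⟩
  · intro i j hij
    by_cases hi : i.val = 0 <;> by_cases hj : j.val = 0
    · exact ZMod.val_injective m (hi.trans hj.symm)
    · rw [gv0 i hi, gv j hj] at hij
      exact absurd hij (hpne _ (by show a ≤ a + j.val - 1; omega)
        (by show a + j.val - 1 ≤ b; have := hvlt j; omega))
    · rw [gv i hi, gv0 j hj] at hij
      exact absurd hij.symm (hpne _ (by show a ≤ a + i.val - 1; omega)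
        (by show a + i.val - 1 ≤ b; have := hvlt i; omega))
    · rw [gv i hi, gv j hj] at hij
      have hv : a + i.val - 1 = a + j.val - 1 := Fin.mk_eq_mk.1 (hf.1 hij)
      exact ZMod.val_injective m (by omega)
  · intro i j
    have hi' := hvlt i; have hj' := hvlt j
    rw [hsucc, hsucc]
    by_cases hi : i.val = 0 <;> by_cases hj : j.val = 0
    · have hij : i = j := ZMod.val_injective m (hi.trans hj.symm)
      subst hij
      rw [gv0 i hi]
      exact iff_of_false (G.irrefl) (by omega)
    · rw [gv0 i hi, gv j hj]
      constructor
      · intro hadj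
        by_cases h1 : j.val = 1
        · right; left; omega
        by_cases h2 : j.val = m - 1
        · left; right; omega
        · exact absurd hadj (hpnadj ⟨a + j.val - 1, hidx j hj⟩
            (by show a < a + j.val - 1; omega) (by show a + j.val - 1 < b; omega))
      · rintro ((⟨h, h'⟩ | ⟨h, h'⟩) | (⟨h, h'⟩ | ⟨h, h'⟩))
        · omega
        · have hk : (⟨a + j.val - 1, hidx j hj⟩ : Fin n) = ⟨b, hb⟩ :=
            Fin.mk_eq_mk.2 (by omega)
          rw [hk]; exact hpb
        · have hk : (⟨a + j.val - 1, hidx j hj⟩ : Fin n) = ⟨a, by omega⟩ :=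
            Fin.mk_eq_mk.2 (by omega)
          rw [hk]; exact hpa
        · omega
    · rw [gv i hi, gv0 j hj]
      constructor
      · intro hadj
        by_cases h1 : i.val = 1
        · left; left; omega
        by_cases h2 : i.val = m - 1
        · right; right; omega
        · exact absurd hadj.symm (hpnadj ⟨a + i.val - 1, hidx i hi⟩
            (by show a < a + i.val - 1; omega) (by show a + i.val - 1 < b; omega))
      · rintro ((⟨h, h'⟩ | ⟨h, h'⟩) | (⟨h, h'⟩ | ⟨h, h'⟩))
        · have hk : (⟨a + i.val - 1, hidx i hi⟩ : Fin n) = ⟨a, by omega⟩ :=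
            Fin.mk_eq_mk.2 (by omega)
          rw [hk]; exact hpa.symm
        · omega
        · omega
        · have hk : (⟨a + i.val - 1, hidx i hi⟩ : Fin n) = ⟨b, hb⟩ :=
            Fin.mk_eq_mk.2 (by omega)
          rw [hk]; exact hpb.symm
    · rw [gv i hi, gv j hj, hf.2]
      show (a + i.val - 1 + 1 = a + j.val - 1 ∨ a + j.val - 1 + 1 = a + i.val - 1) ↔ _
      omega


end Aux

namespace Aux2
open Aux

/-- A vertex in `N[f 0] \ N[f 1]` is adjacent to `f 0` and sees no other path vertex. -/
lemma pend {V : Type*} {G : SimpleGraph V} (hch : Chordal G) {n : ℕ} {f : Fin n → V}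
    (hf : IndPath G n f) (hn : 2 ≤ n) {p : V}
    (hp0 : p ∈ cnbr G (f ⟨0, by omega⟩)) (hp1 : p ∉ cnbr G (f ⟨1, by omega⟩)) :
    G.Adj p (f ⟨0, by omega⟩) ∧ ∀ i : Fin n, 1 ≤ i.val → p ∉ cnbr G (f i) := by
  have h01 : G.Adj (f ⟨0, by omega⟩) (f ⟨1, by omega⟩) := by
    rw [hf.2]; left; rfl
  have hpadj : G.Adj p (f ⟨0, by omega⟩) := by
    rcases mem_cnbr.1 hp0 with he | ha
    · exact absurd (mem_cnbr.2 (Or.inr (by rw [he]; exact h01.symm))) hp1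
    · exact ha.symm
  have hne : ∀ i : Fin n, 1 ≤ i.val → p ≠ f i := by
    intro i h1 he
    rcases mem_cnbr.1 hp0 with he0 | ha0
    · have h' : f i = f ⟨0, by omega⟩ := he ▸ he0
      have : i.val = 0 := Fin.mk_eq_mk.1 (hf.1 h')
      omega
    · have hi1 : i.val = 1 := by
        rw [he] at ha0
        rcases (hf.2 _ _).1 ha0 with h | h
        · have h' : 0 + 1 = i.val := h
          omega
        · have h' : i.val + 1 = 0 := h
          omega
      have hi : i = ⟨1, by omega⟩ := Fin.ext hi1
      rw [hi] at he
      exact hp1 (by rw [he]; exact self_mem_cnbr _)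
  refine ⟨hpadj, ?_⟩
  have key : ∀ m : ℕ, ∀ i : Fin n, i.val = m → 1 ≤ i.val → ¬ G.Adj p (f i) := by
    intro m
    induction m using Nat.strong_induction_on with
    | _ m IH =>
      intro i him h1 hadj
      by_cases h2 : i.val = 1
      · refine hp1 (mem_cnbr.2 (Or.inr ?_))
        have hi : i = ⟨1, by omega⟩ := Fin.ext h2
        rw [← hi]; exact hadj.symm
      · have hadj' : G.Adj p (f ⟨i.val, i.isLt⟩) := by
          have hi : (⟨i.val, i.isLt⟩ : Fin n) = i := Fin.ext rfl
          rw [hi]; exact hadj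
        refine chordal_fan hch hf (p := p) (a := 0) (b := i.val) (by omega) i.isLt hpadj hadj' ?_
        intro k hk1 hk2 hmem
        rcases mem_cnbr.1 hmem with he | ha
        · exact hne k (by omega) he
        · exact IH k.val (by omega) k rfl (by omega) ha.symm
  intro i h1 hmem
  rcases mem_cnbr.1 hmem with he | ha
  · exact hne i h1 he
  · exact key i.val i rfl h1 ha.symm

/-- Step-up: an induced path in `G[IR]` with at least 3 vertices can be extended. -/
lemma stepup {V : Type*} {G : SimpleGraph V} (hch : Chordal G) (hP7 : PkFree G 7) {IR : Set V}
    (hIR : IsIrredundantSet G IR) {n : ℕ} (hn : 3 ≤ n) {f : Fin n → V}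
    (hf : IndPath G n f) (hfIR : ∀ i, f i ∈ IR) :
    ∃ g : Fin (n + 1) → V, IndPath G (n + 1) g ∧ ∀ i, g i ∈ IR := by
  obtain ⟨hdom, hmin, hdist⟩ := hIR
  have hn1 : 1 ≤ n := by omega
  have hinc : ∀ x y : V, x ∈ IR → y ∈ IR → x ≠ y → ∃ p, p ∈ cnbr G x ∧ p ∉ cnbr G y := by
    intro x y hx hy hxy
    by_contra h
    push_neg at h
    have hsub : cnbr G x ⊆ cnbr G y := fun p hp => h p hp
    have hne : cnbr G x ≠ cnbr G y := hdist x hx y hy hxy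
    exact hmin y hy x ⟨hsub, fun hsub' => hne (le_antisymm hsub hsub')⟩
  have hfne : ∀ i j : Fin n, i.val ≠ j.val → f i ≠ f j := by
    intro i j hij he
    exact hij (congrArg Fin.val (hf.1 he))
  -- the reversed path
  have hfr : IndPath G n (f ∘ Fin.rev) := hf.rev
  have hrIdx : ∀ (k : ℕ) (h : k < n), (f ∘ Fin.rev) ⟨k, h⟩ = f ⟨n - 1 - k, by omega⟩ := by
    intro k h
    simp only [Function.comp_apply]
    congr 1
    exact Fin.ext (by rw [Fin.val_rev]; show n - (k + 1) = n - 1 - k; omega)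
  -- p : pendant at f 0
  obtain ⟨p, hp0, hp1⟩ := hinc _ _ (hfIR ⟨0, by omega⟩) (hfIR ⟨1, by omega⟩)
    (hfne _ _ (by show (0:ℕ) ≠ 1; omega))
  obtain ⟨hpadj, hp⟩ := pend hch hf (by omega) hp0 hp1
  -- q : pendant at f (n-1)
  obtain ⟨q, hq0, hq1⟩ := hinc _ _ (hfIR ⟨n - 1, by omega⟩) (hfIR ⟨n - 2, by omega⟩)
    (hfne _ _ (by show n - 1 ≠ n - 2; omega))
  have hq0' : q ∈ cnbr G ((f ∘ Fin.rev) ⟨0, by omega⟩) := by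
    rw [hrIdx 0 (by omega)]
    have he : (⟨n - 1 - 0, by omega⟩ : Fin n) = ⟨n - 1, by omega⟩ :=
      Fin.ext (by show n - 1 - 0 = n - 1; omega)
    rw [he]; exact hq0
  have hq1' : q ∉ cnbr G ((f ∘ Fin.rev) ⟨1, by omega⟩) := by
    rw [hrIdx 1 (by omega)]
    have he : (⟨n - 1 - 1, by omega⟩ : Fin n) = ⟨n - 2, by omega⟩ :=
      Fin.ext (by show n - 1 - 1 = n - 2; omega)
    rw [he]; exact hq1
  obtain ⟨hqadj', hq'⟩ := pend hch hfr (by omega) hq0' hq1'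
  have hqadj : G.Adj q (f ⟨n - 1, by omega⟩) := by
    rw [hrIdx 0 (by omega)] at hqadj'
    have he : (⟨n - 1 - 0, by omega⟩ : Fin n) = ⟨n - 1, by omega⟩ :=
      Fin.ext (by show n - 1 - 0 = n - 1; omega)
    rwa [he] at hqadj'
  have hqlow : ∀ i : Fin n, i.val + 1 < n → q ∉ cnbr G (f i) := by
    intro i hi
    have hj := hq' ⟨n - 1 - i.val, by omega⟩ (by show 1 ≤ n - 1 - i.val; omega)
    rw [hrIdx _ (by omega)] at hj
    have he : (⟨n - 1 - (n - 1 - i.val), by omega⟩ : Fin n) = i :=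
      Fin.ext (by show n - 1 - (n - 1 - i.val) = i.val; omega)
    rwa [he] at hj
  -- basic separations
  have hqf0 : q ∉ cnbr G (f ⟨0, by omega⟩) := hqlow ⟨0, by omega⟩ (by show 0 + 1 < n; omega)
  have hpne_q : p ≠ q := fun h => hqf0 (h ▸ hp0)
  have hqne_p : q ≠ p := fun h => hpne_q h.symm
  -- g1 = f ++ [q]
  have hg1 : IndPath G (n + 1)
      (fun i : Fin (n+1) => if h : i.val < n then f ⟨i.val, h⟩ else q) :=
    hf.snoc hn1 hqadj.symm hqlow
  set g1 : Fin (n+1) → V := fun i => if h : i.val < n then f ⟨i.val, h⟩ else q with hg1def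
  have g1lt : ∀ (k : ℕ) (hk : k < n) (h : k < n + 1), g1 ⟨k, h⟩ = f ⟨k, hk⟩ := by
    intro k hk h; simp only [hg1def]; rw [dif_pos hk]
  have g1last : g1 ⟨n, by omega⟩ = q := by simp only [hg1def]; rw [dif_neg (by omega)]
  -- p and q are nonadjacent
  have hpq : ¬ G.Adj p q := by
    intro hpq
    refine chordal_fan hch hg1 (p := p) (a := 0) (b := n) (by omega) (by omega) ?_ ?_ ?_
    · rw [g1lt 0 (by omega)]; exact hpadj
    · rw [g1last]; exact hpq
    · intro k h1 h2
      rw [show (k : Fin (n+1)) = ⟨k.val, k.isLt⟩ from Fin.ext rfl, g1lt k.val (by omega)]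
      exact hp ⟨k.val, by omega⟩ (by show 1 ≤ k.val; omega)
  have hpnq : p ∉ cnbr G q := by
    intro h
    rcases mem_cnbr.1 h with he | ha
    · exact hpne_q he
    · exact hpq ha.symm
  -- minimal-neighborhood vertices below p and q
  obtain ⟨w, hwIR, hw⟩ := hdom p
  obtain ⟨w', hw'IR, hw'⟩ := hdom q
  have hwp : w ∈ cnbr G p := hw (self_mem_cnbr w)
  have hw'q : w' ∈ cnbr G q := hw' (self_mem_cnbr w')
  -- vertices not in N[p] are not in N[w], similarly for q, w'
  have hwavoid : ∀ u : V, p ∉ cnbr G u → w ∉ cnbr G u := by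
    intro u hu hc
    exact hu (cnbr_comm.1 (hw (cnbr_comm.1 hc)))
  have hw'avoid : ∀ u : V, q ∉ cnbr G u → w' ∉ cnbr G u := by
    intro u hu hc
    exact hu (cnbr_comm.1 (hw' (cnbr_comm.1 hc)))
  by_cases hcw : w ∈ cnbr G (f ⟨0, by omega⟩)
  · -- extend the reversed path by w
    have hwne : w ≠ f ⟨0, by omega⟩ := by
      intro he
      have hf1 : f ⟨1, by omega⟩ ∈ cnbr G (f ⟨0, by omega⟩) :=
        mem_cnbr.2 (Or.inr (by rw [hf.2]; left; rfl))
      rw [← he] at hf1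
      exact hp1 (cnbr_comm.1 (hw hf1))
    have hwadj : G.Adj (f ⟨0, by omega⟩) w := by
      rcases mem_cnbr.1 hcw with he | ha
      · exact absurd he hwne
      · exact ha
    have hlast : G.Adj ((f ∘ Fin.rev) ⟨n - 1, by omega⟩) w := by
      rw [hrIdx _ (by omega)]
      convert hwadj using 3
      omega
    have hmid : ∀ i : Fin n, i.val + 1 < n → w ∉ cnbr G ((f ∘ Fin.rev) i) := by
      intro i hi
      rw [show i = (⟨i.val, i.isLt⟩ : Fin n) from Fin.ext rfl, hrIdx _ (by omega)]
      exact hwavoid _ (hp ⟨n - 1 - i.val, by omega⟩ (by show 1 ≤ n - 1 - i.val; omega))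
    refine ⟨_, hfr.snoc hn1 hlast hmid, ?_⟩
    intro i
    by_cases h : i.val < n
    · rw [dif_pos h]; exact hfIR _
    · rw [dif_neg h]; exact hwIR
  by_cases hcw' : w' ∈ cnbr G (f ⟨n - 1, by omega⟩)
  · -- extend f by w'
    have hw'ne : w' ≠ f ⟨n - 1, by omega⟩ := by
      intro he
      have hf2 : f ⟨n - 2, by omega⟩ ∈ cnbr G (f ⟨n - 1, by omega⟩) :=
        mem_cnbr.2 (Or.inr (by rw [hf.2]; right; show n - 2 + 1 = n - 1; omega))
      rw [← he] at hf2
      exact hq1 (cnbr_comm.1 (hw' hf2))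
    have hw'adj : G.Adj (f ⟨n - 1, by omega⟩) w' := by
      rcases mem_cnbr.1 hcw' with he | ha
      · exact absurd he hw'ne
      · exact ha
    have hmid : ∀ i : Fin n, i.val + 1 < n → w' ∉ cnbr G (f i) := by
      intro i hi
      exact hw'avoid _ (hqlow i hi)
    refine ⟨_, hf.snoc hn1 hw'adj hmid, ?_⟩
    intro i
    by_cases h : i.val < n
    · rw [dif_pos h]; exact hfIR _
    · rw [dif_neg h]; exact hw'IR
  -- both ends blocked: build an induced path on n+4 ≥ 7 vertices
  exfalso
  have hw'neq : w' ≠ q := by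
    intro he; exact hcw' (he ▸ hq0)
  have hw'adjq : G.Adj q w' := by
    rcases mem_cnbr.1 hw'q with he | ha
    · exact absurd he hw'neq
    · exact ha
  -- g2 = f ++ [q, w']
  have hmid2 : ∀ i : Fin (n+1), i.val + 1 < n + 1 → w' ∉ cnbr G (g1 i) := by
    intro i hi
    rw [show i = (⟨i.val, i.isLt⟩ : Fin (n+1)) from Fin.ext rfl, g1lt i.val (by omega)]
    by_cases h : i.val + 1 < n
    · exact hw'avoid _ (hqlow ⟨i.val, by omega⟩ h)
    · have he : (⟨i.val, by omega⟩ : Fin n) = ⟨n - 1, by omega⟩ :=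
        Fin.ext (by show i.val = n - 1; omega)
      rw [he]
      exact hcw'
  have hlast2 : G.Adj (g1 ⟨n + 1 - 1, by omega⟩) w' := by
    rw [show (⟨n + 1 - 1, by omega⟩ : Fin (n+1)) = ⟨n, by omega⟩ from
      Fin.ext (by show n + 1 - 1 = n; omega), g1last]
    exact hw'adjq
  have hg2 : IndPath G (n + 2)
      (fun i : Fin (n+2) => if h : i.val < n + 1 then g1 ⟨i.val, h⟩ else w') :=
    hg1.snoc (by omega) hlast2 hmid2
  set g2 : Fin (n+2) → V := fun i => if h : i.val < n + 1 then g1 ⟨i.val, h⟩ else w' with hg2def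
  have g2v : ∀ (k : ℕ) (h : k < n + 2), g2 ⟨k, h⟩ =
      if hk : k < n then f ⟨k, hk⟩ else if k = n then q else w' := by
    intro k h
    by_cases h2 : k < n
    · rw [dif_pos h2]
      have hk1 : g2 ⟨k, h⟩ = g1 ⟨k, by omega⟩ := by
        simp only [hg2def]; rw [dif_pos (show k < n + 1 by omega)]
      rw [hk1, g1lt k h2]
    · rw [dif_neg h2]
      by_cases h3 : k = n
      · rw [if_pos h3]
        have hk1 : g2 ⟨k, h⟩ = g1 ⟨k, by omega⟩ := by
          simp only [hg2def]; rw [dif_pos (show k < n + 1 by omega)]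
        have he : (⟨k, by omega⟩ : Fin (n+1)) = ⟨n, by omega⟩ :=
          Fin.ext (by show k = n; omega)
        rw [hk1, he, g1last]
      · rw [if_neg h3]
        simp only [hg2def]
        rw [dif_neg (show ¬ k < n + 1 by omega)]
  -- g3 = rev g2 ++ [p] = [w', q, f(n-1), ..., f 0, p]
  have hg2r : IndPath G (n + 2) (g2 ∘ Fin.rev) := hg2.rev
  have g2rv : ∀ (k : ℕ) (h : k < n + 2), (g2 ∘ Fin.rev) ⟨k, h⟩ = g2 ⟨n + 1 - k, by omega⟩ := by
    intro k h
    simp only [Function.comp_apply]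
    congr 1
    exact Fin.ext (by rw [Fin.val_rev]; show n + 2 - (k + 1) = n + 1 - k; omega)
  have hlast3 : G.Adj ((g2 ∘ Fin.rev) ⟨n + 2 - 1, by omega⟩) p := by
    rw [g2rv _ (by omega), g2v _ (by omega)]
    rw [dif_pos (by omega : n + 1 - (n + 2 - 1) < n)]
    convert hpadj.symm using 3
    omega
  have hmid3 : ∀ i : Fin (n+2), i.val + 1 < n + 2 → p ∉ cnbr G ((g2 ∘ Fin.rev) i) := by
    intro i hi
    rw [show i = (⟨i.val, i.isLt⟩ : Fin (n+2)) from Fin.ext rfl, g2rv _ (by omega),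
      g2v _ (by omega)]
    set k := n + 1 - i.val with hk
    have hk1 : 1 ≤ k := by omega
    by_cases h2 : k < n
    · rw [dif_pos h2]
      exact hp ⟨k, h2⟩ (by show 1 ≤ k; omega)
    · by_cases h3 : k = n
      · rw [dif_neg h2, if_pos h3]
        exact hpnq
      · rw [dif_neg h2, if_neg h3]
        intro hc
        exact hpnq (hw' hc)
  have hg3 : IndPath G (n + 3)
      (fun i : Fin (n+3) => if h : i.val < n + 2 then (g2 ∘ Fin.rev) ⟨i.val, h⟩ else p) :=
    hg2r.snoc (by omega) hlast3 hmid3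
  set g3 : Fin (n+3) → V :=
    fun i => if h : i.val < n + 2 then (g2 ∘ Fin.rev) ⟨i.val, h⟩ else p with hg3def
  -- g4 = g3 ++ [w]
  have hwnep : w ≠ p := by
    intro he; exact hcw (he ▸ hp0)
  have hwadjp : G.Adj p w := by
    rcases mem_cnbr.1 hwp with he | ha
    · exact absurd he hwnep
    · exact ha
  have hlast4 : G.Adj (g3 ⟨n + 3 - 1, by omega⟩) w := by
    simp only [hg3def]
    rw [dif_neg (by omega)]
    exact hwadjp
  have hqnp : q ∉ cnbr G p := by
    intro h
    rcases mem_cnbr.1 h with he | ha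
    · exact hpne_q he.symm
    · exact hpq ha
  have hmid4 : ∀ i : Fin (n+3), i.val + 1 < n + 3 → w ∉ cnbr G (g3 i) := by
    intro i hi
    simp only [hg3def]
    rw [dif_pos (by omega : i.val < n + 2), g2rv _ (by omega), g2v _ (by omega)]
    set k := n + 1 - i.val with hk
    by_cases h2 : k < n
    · rw [dif_pos h2]
      by_cases h3 : 1 ≤ k
      · exact hwavoid _ (hp ⟨k, h2⟩ h3)
      · have he : (⟨k, h2⟩ : Fin n) = ⟨0, by omega⟩ := Fin.ext (by show k = 0; omega)
        rw [he]
        exact hcw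
    · by_cases h3 : k = n
      · rw [dif_neg h2, if_pos h3]
        exact hwavoid _ hpnq
      · rw [dif_neg h2, if_neg h3]
        intro hc
        exact hwavoid _ hpnq (hw' hc)
  have hg4 : IndPath G (n + 4)
      (fun i : Fin (n+4) => if h : i.val < n + 3 then g3 ⟨i.val, h⟩ else w) :=
    hg3.snoc (by omega) hlast4 hmid4
  have h7 : IndPath G 7 (_ ∘ Fin.castLE (by omega : 7 ≤ n + 4)) := hg4.castLE (by omega)
  exact hP7 ⟨_, h7.1, h7.2⟩

end Aux2

namespace Aux2
open Aux

/-- In a chordal P7-free graph, adjacency on an irredundant set is transitive: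
irredundant components are cliques. -/
lemma IR_clique {V : Type*} [Fintype V] {G : SimpleGraph V} (hch : Chordal G)
    (hP7 : PkFree G 7) {IR : Set V} (hIR : IsIrredundantSet G IR) :
    ∀ x ∈ IR, ∀ y ∈ IR, ∀ z ∈ IR, G.Adj x y → G.Adj y z → x ≠ z → G.Adj x z := by
  intro x hx y hy z hz hxy hyz hxz
  by_contra hnadj
  set f3 : Fin 3 → V := fun i => if i.val = 0 then x else if i.val = 1 then y else z with hf3
  have hval : ∀ i : Fin 3, i.val = 0 ∨ i.val = 1 ∨ i.val = 2 := by
    intro i; have := i.isLt; omega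
  have hf3v0 : ∀ i : Fin 3, i.val = 0 → f3 i = x := by
    intro i h; simp only [hf3]; rw [if_pos h]
  have hf3v1 : ∀ i : Fin 3, i.val = 1 → f3 i = y := by
    intro i h; simp only [hf3]; rw [if_neg (by omega), if_pos h]
  have hf3v2 : ∀ i : Fin 3, i.val = 2 → f3 i = z := by
    intro i h; simp only [hf3]; rw [if_neg (by omega), if_neg (by omega)]
  have hpath : IndPath G 3 f3 := by
    constructor
    · intro i j hij
      apply Fin.ext
      rcases hval i with h1 | h1 | h1 <;> rcases hval j with h2 | h2 | h2 <;>
        rw [h1, h2] <;>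
        first
          | rfl
          | (exfalso
             rw [show f3 i = _ from by first | exact hf3v0 i h1 | exact hf3v1 i h1 | exact hf3v2 i h1,
                show f3 j = _ from by first | exact hf3v0 j h2 | exact hf3v1 j h2 | exact hf3v2 j h2] at hij
             first
               | exact hxy.ne hij
               | exact hxy.ne hij.symm
               | exact hyz.ne hij
               | exact hyz.ne hij.symm
               | exact hxz hij
               | exact hxz hij.symm)
    · intro i j
      rcases hval i with h1 | h1 | h1 <;> rcases hval j with h2 | h2 | h2 <;>
        [rw [hf3v0 i h1, hf3v0 j h2]; rw [hf3v0 i h1, hf3v1 j h2];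
         rw [hf3v0 i h1, hf3v2 j h2]; rw [hf3v1 i h1, hf3v0 j h2];
         rw [hf3v1 i h1, hf3v1 j h2]; rw [hf3v1 i h1, hf3v2 j h2];
         rw [hf3v2 i h1, hf3v0 j h2]; rw [hf3v2 i h1, hf3v1 j h2];
         rw [hf3v2 i h1, hf3v2 j h2]] <;>
        rw [h1, h2] <;>
        first
          | exact iff_of_false (G.irrefl) (by omega)
          | exact iff_of_true hxy (by omega)
          | exact iff_of_true hxy.symm (by omega)
          | exact iff_of_true hyz (by omega)
          | exact iff_of_true hyz.symm (by omega)
          | exact iff_of_false hnadj (by omega)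
          | exact iff_of_false (fun h => hnadj h.symm) (by omega)
  have hIR3 : ∀ i, f3 i ∈ IR := by
    intro i
    rcases hval i with h1 | h1 | h1
    · rw [hf3v0 i h1]; exact hx
    · rw [hf3v1 i h1]; exact hy
    · rw [hf3v2 i h1]; exact hz
  have key : ∀ m : ℕ, ∃ g : Fin (3 + m) → V, IndPath G (3 + m) g ∧ ∀ i, g i ∈ IR := by
    intro m
    induction m with
    | zero => exact ⟨f3, hpath, hIR3⟩
    | succ m ih =>
      obtain ⟨g, hg, hgIR⟩ := ih
      exact stepup hch hP7 hIR (Nat.le_add_right 3 m) hg hgIR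
  obtain ⟨g, hg, -⟩ := key (Fintype.card V)
  have hcard := Fintype.card_le_of_injective g hg.1
  rw [Fintype.card_fin] at hcard
  omega

end Aux2

namespace Aux3
open Aux Aux2

variable {G : SimpleGraph V} {IR : Set V}

/-- Characterization of components of `G[IR]` when adjacency is transitive on `IR`. -/
lemma comp_eq_cnbr
    (hclq : ∀ x ∈ IR, ∀ y ∈ IR, ∀ z ∈ IR, G.Adj x y → G.Adj y z → x ≠ z → G.Adj x z)
    {C : Set V} (hC : IsCompOf G IR C) {x : V} (hx : x ∈ C) : C = cnbr G x ∩ IR := by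
  obtain ⟨hsub, -, hconn, hclose⟩ := hC
  have hxIR : x ∈ IR := hsub hx
  apply Set.Subset.antisymm
  · intro y hy
    refine ⟨?_, hsub hy⟩
    have claim : ∀ {a b : ↥C} (_ : (G.induce C).Walk a b),
        (a : V) ∈ cnbr G x → (b : V) ∈ cnbr G x := by
      intro a b w
      induction w with
      | nil => exact fun h => h
      | @cons a c b h p ih =>
        intro ha
        apply ih
        have hadj : G.Adj (a : V) (c : V) := h
        rcases mem_cnbr.1 ha with he | hxa
        · exact mem_cnbr.2 (Or.inr (he ▸ hadj))
        · by_cases hcx : (c : V) = x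
          · rw [hcx]; exact self_mem_cnbr x
          · exact mem_cnbr.2 (Or.inr
              (hclq x hxIR (a : V) (hsub a.2) (c : V) (hsub c.2) hxa hadj
                (fun hh => hcx hh.symm)))
    obtain ⟨w⟩ := hconn.preconnected ⟨x, hx⟩ ⟨y, hy⟩
    exact claim w (self_mem_cnbr x)
  · intro u hu
    rcases mem_cnbr.1 hu.1 with he | hadj
    · rwa [he]
    · exact hclose x hx u hu.2 hadj

lemma cnbr_isComp
    (hclq : ∀ x ∈ IR, ∀ y ∈ IR, ∀ z ∈ IR, G.Adj x y → G.Adj y z → x ≠ z → G.Adj x z)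
    {x : V} (hx : x ∈ IR) : IsCompOf G IR (cnbr G x ∩ IR) := by
  have hxm : x ∈ cnbr G x ∩ IR := ⟨self_mem_cnbr x, hx⟩
  haveI hnem : Nonempty ↥(cnbr G x ∩ IR) := ⟨⟨x, hxm⟩⟩
  refine ⟨Set.inter_subset_right, ⟨x, hxm⟩, SimpleGraph.Connected.mk ?_, ?_⟩
  · intro a b
    have key : ∀ c : ↥(cnbr G x ∩ IR), (G.induce (cnbr G x ∩ IR)).Reachable c ⟨x, hxm⟩ := by
      intro c
      by_cases h : (c : V) = x
      · rw [show c = ⟨x, hxm⟩ from Subtype.ext h]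
      · have hadj : G.Adj (c : V) x := by
          rcases mem_cnbr.1 c.2.1 with he | ha
          · exact absurd he h
          · exact ha.symm
        exact SimpleGraph.Adj.reachable hadj
    exact (key a).trans (key b).symm
  · intro u hu yy hyy hadj
    rcases mem_cnbr.1 hu.1 with he | hxu
    · exact ⟨mem_cnbr.2 (Or.inr (he ▸ hadj)), hyy⟩
    · by_cases hyx : yy = x
      · exact ⟨by rw [hyx]; exact self_mem_cnbr x, hyy⟩
      · exact ⟨mem_cnbr.2 (Or.inr
          (hclq x hx u hu.2 yy hyy hxu hadj (fun hh => hyx hh.symm))), hyy⟩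

/-- Minimal dominating sets are the dominating sets all of whose vertices have a
private neighbor. -/
lemma minDom_iff {D : Set V} :
    IsMinDomSet G D ↔ Dominates G D Set.univ ∧ ∀ z ∈ D, ∃ u, cnbr G u ∩ D = {z} := by
  constructor
  · rintro ⟨hdom, hmin⟩
    refine ⟨hdom, fun z hz => ?_⟩
    by_contra hno
    push_neg at hno
    refine hmin (D \ {z}) ⟨Set.diff_subset, fun hsub => ?_⟩ (fun u _ => ?_)
    · exact (hsub hz).2 rfl
    · obtain ⟨d, hd, hud⟩ := mem_cnbrSet.1 (hdom (Set.mem_univ u))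
      by_cases hall : ∀ d' ∈ D, u ∈ cnbr G d' → d' = z
      · exfalso
        apply hno u
        apply Set.Subset.antisymm
        · rintro b ⟨hb1, hb2⟩
          exact hall b hb2 (cnbr_comm.1 hb1)
        · rintro b (rfl : b = z)
          exact ⟨cnbr_comm.1 ((hall d hd hud) ▸ hud), hz⟩
      · push_neg at hall
        obtain ⟨d', hd', hud', hdz⟩ := hall
        exact mem_cnbrSet.2 ⟨d', ⟨hd', hdz⟩, hud'⟩
  · rintro ⟨hdom, hpriv⟩
    refine ⟨hdom, fun D' hD' hdom' => ?_⟩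
    obtain ⟨z, hzD, hzD'⟩ := Set.exists_of_ssubset hD'
    obtain ⟨u, hu⟩ := hpriv z hzD
    obtain ⟨d, hd, hud⟩ := mem_cnbrSet.1 (hdom' (Set.mem_univ u))
    have : d ∈ cnbr G u ∩ D := ⟨cnbr_comm.1 hud, hD'.1 hd⟩
    rw [hu] at this
    exact hzD' (this ▸ hd)

end Aux3

open Aux Aux2 Aux3

/-- In a `P₇`-free chordal graph, for `A ∈ D_RN(G)` and `C₁, …, C_k`
exactly the irredundant components not dominated by `A`, the irredundant extensions of `A`
are exactly the sets `{x₁, …, x_k}` with `xᵢ ∈ Cᵢ`. -/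
theorem stmt_12 [Fintype V] (G : SimpleGraph V) (hch : Chordal G) (hP7 : PkFree G 7)
    (IR : Set V) (hIR : IsIrredundantSet G IR)
    (A : Set V) (hA : memDRN G IR A)
    (k : ℕ) (Cs : Fin k → Set V) (hinj : Function.Injective Cs)
    (hcomp : ∀ i, IsCompOf G IR (Cs i) ∧ ¬ Cs i ⊆ onbrSet G A)
    (hall : ∀ C : Set V, IsCompOf G IR C → ¬ C ⊆ onbrSet G A → ∃ i, Cs i = C)
    (I : Set V) (hI : I ⊆ IR) :
    IsMinDomSet G (A ∪ I) ↔
      ∃ x : Fin k → V, (∀ i, x i ∈ Cs i) ∧ I = Set.range x := by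
  obtain ⟨D₀, hD₀, hAeq⟩ := hA
  have hclq := IR_clique hch hP7 hIR
  have hAIR : ∀ a ∈ A, a ∉ IR := by
    intro a ha; rw [hAeq] at ha; exact ha.2
  have hAD : A ⊆ D₀ := by
    intro a ha; rw [hAeq] at ha; exact ha.1
  -- KEY1 : every vertex not dominated by A sees an entire undominated component
  have key1 : ∀ v : V, v ∉ cnbrSet G A → ∃ i, Cs i ⊆ cnbr G v := by
    intro v hv
    obtain ⟨xx, hxxIR, hxx⟩ := hIR.1 v
    have hxxA : xx ∉ cnbrSet G A := by
      intro hmem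
      obtain ⟨a, ha, hxa⟩ := mem_cnbrSet.1 hmem
      exact hv (mem_cnbrSet.2 ⟨a, ha, cnbr_comm.1 (hxx (cnbr_comm.1 hxa))⟩)
    have hic : IsCompOf G IR (cnbr G xx ∩ IR) := cnbr_isComp hclq hxxIR
    have hns : ¬ (cnbr G xx ∩ IR) ⊆ onbrSet G A := by
      intro hsub
      exact hxxA (hsub ⟨self_mem_cnbr xx, hxxIR⟩).1
    obtain ⟨i, hi⟩ := hall _ hic hns
    refine ⟨i, ?_⟩
    rw [hi]
    exact fun u hu => hxx hu.1
  -- KEY2 : components are cliques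
  have key2 : ∀ i, ∀ x ∈ Cs i, Cs i ⊆ cnbr G x := by
    intro i x hx
    rw [comp_eq_cnbr hclq (hcomp i).1 hx]
    exact Set.inter_subset_left
  -- components are pairwise disjoint
  have disj : ∀ i j : Fin k, ∀ u : V, u ∈ Cs i → u ∈ Cs j → i = j := by
    intro i j u hui huj
    apply hinj
    rw [comp_eq_cnbr hclq (hcomp i).1 hui, comp_eq_cnbr hclq (hcomp j).1 huj]
  -- each undominated component has a vertex undominated by A
  have core : ∀ i, ∃ c, c ∈ Cs i ∧ c ∉ cnbrSet G A := by
    intro i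
    obtain ⟨c, hc, hcn⟩ := Set.not_subset.1 (hcomp i).2
    have hcIR : c ∈ IR := (hcomp i).1.1 hc
    refine ⟨c, hc, fun hmem => ?_⟩
    refine hcn ⟨hmem, fun hcA => ?_⟩
    rw [hAeq] at hcA
    exact hcA.2 hcIR
  -- KEY3 : private neighbors of elements of A avoiding all undominated components
  have key3 : ∀ a ∈ A, ∃ u, cnbr G u ∩ A = {a} ∧ ∀ i, ∀ b ∈ Cs i, b ∉ cnbr G u := by
    intro a ha
    obtain ⟨u₀, hu₀⟩ := (minDom_iff.1 hD₀).2 a (hAD ha)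
    obtain ⟨y, hyIR, hy⟩ := hIR.1 u₀
    have hyD : cnbr G y ∩ D₀ = {a} := by
      apply Set.Subset.antisymm
      · intro d hd
        rw [← hu₀]
        exact ⟨hy hd.1, hd.2⟩
      · rintro b (rfl : b = a)
        obtain ⟨d, hd, hyd⟩ := mem_cnbrSet.1 ((minDom_iff.1 hD₀).1 (Set.mem_univ y))
        have hdm : d ∈ cnbr G u₀ ∩ D₀ := ⟨hy (cnbr_comm.1 hyd), hd⟩
        rw [hu₀] at hdm
        refine ⟨?_, hAD ha⟩
        rw [← hdm]
        exact cnbr_comm.1 hyd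
    have hya : a ∈ cnbr G y := by
      have : a ∈ cnbr G y ∩ D₀ := by rw [hyD]; rfl
      exact this.1
    refine ⟨y, ?_, ?_⟩
    · apply Set.Subset.antisymm
      · intro b hb
        rw [← hyD]
        exact ⟨hb.1, hAD hb.2⟩
      · rintro b (rfl : b = a)
        exact ⟨hya, ha⟩
    · intro i b hb hmem
      -- b ∈ Cs i and b ∈ N[y] forces y ∈ Cs i
      have hbIR : b ∈ IR := (hcomp i).1.1 hb
      have hyC : y ∈ Cs i := by
        rw [comp_eq_cnbr hclq (hcomp i).1 hb]
        exact ⟨cnbr_comm.1 hmem, hyIR⟩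
      obtain ⟨c, hcC, hcA⟩ := core i
      obtain ⟨d, hd, hcd⟩ := mem_cnbrSet.1 ((minDom_iff.1 hD₀).1 (Set.mem_univ c))
      have hdIR : d ∈ IR := by
        by_contra hdn
        exact hcA (mem_cnbrSet.2 ⟨d, by rw [hAeq]; exact ⟨hd, hdn⟩, hcd⟩)
      have hdC : d ∈ Cs i := by
        rw [comp_eq_cnbr hclq (hcomp i).1 hcC]
        exact ⟨cnbr_comm.1 hcd, hdIR⟩
      have hdy : d ∈ cnbr G y ∩ D₀ := ⟨key2 i y hyC hdC, hd⟩
      rw [hyD] at hdy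
      exact hAIR a ha (hdy ▸ hdIR)
  constructor
  · -- forward direction
    intro hmds
    have hdomAI := (minDom_iff.1 hmds).1
    have hpriv := (minDom_iff.1 hmds).2
    have hx : ∀ i, ∃ d, d ∈ I ∧ d ∈ Cs i := by
      intro i
      obtain ⟨c, hcC, hcA⟩ := core i
      obtain ⟨d, hd, hcd⟩ := mem_cnbrSet.1 (hdomAI (Set.mem_univ c))
      rcases hd with hdA | hdI
      · exact absurd (mem_cnbrSet.2 ⟨d, hdA, hcd⟩) hcA
      · refine ⟨d, hdI, ?_⟩
        rw [comp_eq_cnbr hclq (hcomp i).1 hcC]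
        exact ⟨cnbr_comm.1 hcd, hI hdI⟩
    choose x hxI hxC using hx
    refine ⟨x, hxC, ?_⟩
    apply Set.Subset.antisymm
    · intro z hz
      obtain ⟨u, hu⟩ := hpriv z (Or.inr hz)
      have huA : u ∉ cnbrSet G A := by
        intro hmem
        obtain ⟨a, haA, hua⟩ := mem_cnbrSet.1 hmem
        have : a ∈ cnbr G u ∩ (A ∪ I) := ⟨cnbr_comm.1 hua, Or.inl haA⟩
        rw [hu] at this
        exact hAIR a haA (this ▸ hI hz)
      obtain ⟨j, hsub⟩ := key1 u huA
      have : x j ∈ cnbr G u ∩ (A ∪ I) := ⟨hsub (hxC j), Or.inr (hxI j)⟩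
      rw [hu] at this
      exact ⟨j, this.symm ▸ rfl⟩
    · rintro b ⟨i, rfl⟩
      exact hxI i
  · -- backward direction
    rintro ⟨x, hxC, rfl⟩
    rw [minDom_iff]
    constructor
    · intro v _
      by_cases hv : v ∈ cnbrSet G A
      · exact cnbrSet_mono Set.subset_union_left hv
      · obtain ⟨i, hsub⟩ := key1 v hv
        exact mem_cnbrSet.2 ⟨x i, Or.inr ⟨i, rfl⟩, cnbr_comm.1 (hsub (hxC i))⟩
    · rintro z (hzA | ⟨i, rfl⟩)
      · obtain ⟨u, hu1, hu2⟩ := key3 z hzA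
        refine ⟨u, Set.Subset.antisymm ?_ ?_⟩
        · rintro b ⟨hb, hbA | ⟨j, rfl⟩⟩
          · exact hu1 ▸ Set.mem_inter hb hbA
          · exact absurd hb (hu2 j (x j) (hxC j))
        · refine Set.singleton_subset_iff.2 ⟨?_, Or.inl hzA⟩
          have hz : z ∈ cnbr G u ∩ A := by rw [hu1]; rfl
          exact hz.1
      · obtain ⟨c, hcC, hcA⟩ := core i
        refine ⟨c, Set.Subset.antisymm ?_ ?_⟩
        · rintro b ⟨hb, hbA | ⟨j, rfl⟩⟩
          · exact absurd (mem_cnbrSet.2 ⟨b, hbA, cnbr_comm.1 hb⟩) hcA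
          · have hcCj : c ∈ Cs j := by
              rw [comp_eq_cnbr hclq (hcomp j).1 (hxC j)]
              exact ⟨cnbr_comm.1 hb, (hcomp i).1.1 hcC⟩
            rw [disj i j c hcC hcCj]
            exact rfl
        · exact Set.singleton_subset_iff.2
            ⟨cnbr_comm.1 (key2 i (x i) (hxC i) hcC), Or.inr ⟨i, rfl⟩⟩
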